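/- Define the spider state S(n, α) = |0⟩^{⊗n} + e^{iα}|1⟩^{⊗n} ∈ (ℂ²)^{⊗n} for n ≥ 0 and α ∈ ℝ. For all n, m ≥ 0, α, β ∈ ℝ and k ∈ {0,1}, applying the X-fusion success effect E_k = (1/√2)(⟨00| + (−1)^k ⟨11|) to the last qubit of S(n+1, α) and the first qubit of S(m+1, β) yields (id^{⊗n} ⊗ E_k ⊗ id^{⊗m})(S(n+1, α) ⊗ S(m+1, β)) = (1/√2) · S(n+m, α + β + kπ). That is, a successful X-fusion (the success case of Type II fusion) fuses two spiders into a single spider, with a Pauli-Z byproduct recorded as the phase kπ. -/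
import Mathlib


open Complex

/-- The spider state `S(n, α) = |0⟩^{⊗n} + e^{iα}|1⟩^{⊗n}` as an amplitude function on
computational-basis states of `n` qubits.  For `n = 0` it is the scalar `1 + e^{iα}`. -/
noncomputable def spider (n : ℕ) (α : ℝ) : (Fin n → Fin 2) → ℂ := fun x =>
  (if ∀ i, x i = 0 then 1 else 0) +
    Complex.exp (α * Complex.I) * (if ∀ i, x i = 1 then 1 else 0)

/-- The X-fusion success effect with error bit `k`:
`E_k = (1/√2)(⟨00| + (−1)^k ⟨11|)` as a functional on basis states of two qubits. -/
noncomputable def xFusionEffect (k : Fin 2) (a b : Fin 2) : ℂ :=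
  ((Real.sqrt 2 : ℂ))⁻¹ *
    ((if a = 0 ∧ b = 0 then 1 else 0) +
      (-1 : ℂ) ^ (k : ℕ) * (if a = 1 ∧ b = 1 then 1 else 0))

lemma forall_snoc {n : ℕ} (x : Fin n → Fin 2) (a c : Fin 2) :
    (∀ i, (Fin.snoc x a : Fin (n+1) → Fin 2) i = c) ↔ (∀ i, x i = c) ∧ a = c := by
  constructor
  · intro h
    refine ⟨fun i => ?_, ?_⟩
    · have := h i.castSucc; rwa [Fin.snoc_castSucc] at this
    · have := h (Fin.last n); rwa [Fin.snoc_last] at this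
  · rintro ⟨h1, h2⟩ i
    induction i using Fin.lastCases with
    | last => simpa
    | cast i => simp [h1]

lemma forall_cons {m : ℕ} (y : Fin m → Fin 2) (b c : Fin 2) :
    (∀ i, (Fin.cons b y : Fin (m+1) → Fin 2) i = c) ↔ b = c ∧ ∀ j, y j = c := by
  rw [Fin.forall_fin_succ]; simp

lemma forall_add {n m : ℕ} (z : Fin (n + m) → Fin 2) (c : Fin 2) :
    (∀ i, z i = c) ↔ (∀ i : Fin n, z (Fin.castAdd m i) = c) ∧
      (∀ j : Fin m, z (Fin.natAdd n j) = c) := by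
  constructor
  · exact fun h => ⟨fun i => h _, fun j => h _⟩
  · rintro ⟨h1, h2⟩ i
    induction i using Fin.addCases with
    | left i => exact h1 i
    | right j => exact h2 j

lemma exp_key (α β : ℝ) (k : Fin 2) :
    Complex.exp ((↑(α + β + (k : ℕ) * Real.pi)) * Complex.I) =
      (-1 : ℂ) ^ (k : ℕ) * Complex.exp (α * Complex.I) * Complex.exp (β * Complex.I) := by
  fin_cases k <;> (push_cast; simp [add_mul, Complex.exp_add, Complex.exp_pi_mul_I])

/-- A successful X-fusion (the success case of Type II fusion) applied to the last qubit of
`S(n+1, α)` and the first qubit of `S(m+1, β)` fuses the two spiders into a single spider,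
with a Pauli-Z byproduct recorded as the phase `kπ`:
`(id^{⊗n} ⊗ E_k ⊗ id^{⊗m})(S(n+1, α) ⊗ S(m+1, β)) = (1/√2) · S(n+m, α + β + kπ)`. -/
theorem x_fusion_fuses_spiders (n m : ℕ) (α β : ℝ) (k : Fin 2) :
    ∀ z : Fin (n + m) → Fin 2,
      (∑ a : Fin 2, ∑ b : Fin 2, xFusionEffect k a b *
          spider (n + 1) α (Fin.snoc (fun i : Fin n => z (Fin.castAdd m i)) a) *
          spider (m + 1) β (Fin.cons b (fun j : Fin m => z (Fin.natAdd n j)))) =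
        ((Real.sqrt 2 : ℂ))⁻¹ * spider (n + m) (α + β + (k : ℕ) * Real.pi) z := by
  intro z
  by_cases hp0 : ∀ i : Fin n, z (Fin.castAdd m i) = 0 <;>
  by_cases hq0 : ∀ j : Fin m, z (Fin.natAdd n j) = 0 <;>
  by_cases hp1 : ∀ i : Fin n, z (Fin.castAdd m i) = 1 <;>
  by_cases hq1 : ∀ j : Fin m, z (Fin.natAdd n j) = 1 <;>
  simp only [Fin.sum_univ_two, xFusionEffect, spider, forall_snoc, forall_cons,
    forall_add z, exp_key, hp0, hq0, hp1, hq1, if_true, if_false, and_true, and_false,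
    true_and, false_and, if_pos, iff_true, iff_false, eq_self_iff_true, not_true, not_false_iff] <;>
  norm_num
  all_goals try (
    have hn : Fin n → False := fun i =>
      absurd ((hp0 i).symm.trans (hp1 i)) (by decide)
    simp only [eq_true hn])
  all_goals try (
    have hm : Fin m → False := fun j =>
      absurd ((hq0 j).symm.trans (hq1 j)) (by decide)
    simp only [eq_true hm])
  all_goals try (
    have hn' : ¬(Fin n → False) := fun h => hp1 fun i => (h i).elim
    simp only [eq_false hn'])
  all_goals try (
    have hm' : ¬(Fin m → False) := fun h => hq1 fun j => (h j).elim
    simp only [eq_false hm'])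
  all_goals try (
    have hn'' : ¬(Fin n → False) := fun h => hp0 fun i => (h i).elim
    simp only [eq_false hn''])
  all_goals try (
    have hm'' : ¬(Fin m → False) := fun h => hq0 fun j => (h j).elim
    simp only [eq_false hm''])
  all_goals norm_num
  all_goals ring
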